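/- Spectral witnesses are decomposable: with the notation of the spectral construction with k = 1 (λ_α ≥ μ_1 for α > L, Σ_{α=1}^L ‖ψ_α‖_1² < 1), W can be written as W = A + B with A = Σ_{α>L} (λ_α − μ_1) P_α ≥ 0 and B = μ_1·I − Σ_{α≤L} (λ_α + μ_1) P_α satisfying B^Γ ≥ 0. -/

import Mathlib

open Matrix
open scoped BigOperators ComplexOrder

noncomputable section

/-- Tensor product of two vectors. -/
def tensVec {a b : ℕ} (x : Fin a → ℂ) (y : Fin b → ℂ) : Fin a × Fin b → ℂ :=
  fun p => x p.1 * y p.2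

/-- Rank-one operator |ψ⟩⟨ψ|. -/
def ketbra {a b : ℕ} (ψ : Fin a × Fin b → ℂ) :
    Matrix (Fin a × Fin b) (Fin a × Fin b) ℂ :=
  Matrix.of fun p q => ψ p * star (ψ q)

/-- Inner product ⟨ψ, φ⟩ (conjugate-linear in the first argument). -/
def inn {a b : ℕ} (ψ φ : Fin a × Fin b → ℂ) : ℂ := ∑ p, star (ψ p) * φ p

/-- ψ is a unit vector. -/
def unitVec {a b : ℕ} (ψ : Fin a × Fin b → ℂ) : Prop := inn ψ ψ = 1

/-- Schmidt rank of a vector in the tensor product: the rank of the associated matrix. -/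
def schmidtRank {a b : ℕ} (φ : Fin a × Fin b → ℂ) : ℕ :=
  (Matrix.of fun i j => φ (i, j)).rank

/-- Real quadratic form ⟨φ|W|φ⟩ (real part). -/
def qform {a b : ℕ} (W : Matrix (Fin a × Fin b) (Fin a × Fin b) ℂ)
    (φ : Fin a × Fin b → ℂ) : ℝ :=
  (∑ p, ∑ q, star (φ p) * W p q * φ q).re

/-- Partial transpose on the second factor. -/
def partialTranspose {a b : ℕ} (M : Matrix (Fin a × Fin b) (Fin a × Fin b) ℂ) :
    Matrix (Fin a × Fin b) (Fin a × Fin b) ℂ :=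
  Matrix.of fun p q => M (p.1, q.2) (q.1, p.2)

/-- (s, e, f) form a Schmidt decomposition of ψ with nonincreasing nonnegative
Schmidt coefficients s and orthonormal families e, f. -/
def IsSchmidt {a b d : ℕ} (ψ : Fin a × Fin b → ℂ) (s : Fin d → ℝ)
    (e : Fin d → Fin a → ℂ) (f : Fin d → Fin b → ℂ) : Prop :=
  (∀ i j, ∑ p, star (e i p) * e j p = (if i = j then (1:ℂ) else 0)) ∧
  (∀ i j, ∑ p, star (f i p) * f j p = (if i = j then (1:ℂ) else 0)) ∧
  Antitone s ∧ (∀ j, 0 ≤ s j) ∧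
  ψ = fun p => ∑ j, (s j : ℂ) * e j p.1 * f j p.2

/-- Squared k-norm of ψ, via the variational characterization:
the supremum of squared overlaps with k-separable unit vectors. -/
def knormSq {a b : ℕ} (k : ℕ) (ψ : Fin a × Fin b → ℂ) : ℝ :=
  sSup { t : ℝ | ∃ φ : Fin a × Fin b → ℂ,
    unitVec φ ∧ schmidtRank φ ≤ k ∧ t = Complex.normSq (inn ψ φ) }

-- ===== aux =====
lemma ketbra_herm {a b : ℕ} (ψ : Fin a × Fin b → ℂ) : (ketbra ψ).IsHermitian := by
  ext p q; simp [ketbra, Matrix.conjTranspose_apply, mul_comm]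

lemma mulVec_sum' {n : Type*} [Fintype n] {ι : Type*} (s : Finset ι)
    (M : ι → Matrix n n ℂ) (x : n → ℂ) :
    (∑ i ∈ s, M i) *ᵥ x = ∑ i ∈ s, (M i) *ᵥ x := by
  ext p
  simp only [Matrix.mulVec, dotProduct, Finset.sum_apply, Matrix.sum_apply, Finset.sum_mul]
  exact Finset.sum_comm

lemma quad_sum {n : Type*} [Fintype n] {ι : Type*} (s : Finset ι)
    (M : ι → Matrix n n ℂ) (x : n → ℂ) :
    star x ⬝ᵥ (∑ i ∈ s, M i) *ᵥ x = ∑ i ∈ s, star x ⬝ᵥ (M i) *ᵥ x := by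
  rw [mulVec_sum']
  simp [dotProduct, Finset.mul_sum]
  exact Finset.sum_comm

lemma ketbra_quad {a b : ℕ} (ψ x : Fin a × Fin b → ℂ) :
    star x ⬝ᵥ (ketbra ψ) *ᵥ x = (Complex.normSq (inn ψ x) : ℂ) := by
  have h : star x ⬝ᵥ (ketbra ψ) *ᵥ x = (∑ p, star (x p) * ψ p) * (∑ q, star (ψ q) * x q) := by
    rw [Finset.sum_mul_sum]
    simp only [dotProduct, Matrix.mulVec, ketbra, Finset.mul_sum]
    refine Finset.sum_congr rfl fun p _ => Finset.sum_congr rfl fun q _ => ?_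
    simp [Matrix.of_apply]; ring
  have h1 : (∑ p, star (x p) * ψ p) = star (inn ψ x) := by
    simp [inn, star_sum]; congr 1; ext p; ring
  rw [h, h1, mul_comm]
  exact Complex.mul_conj _

lemma herm_quad_im {n : Type*} [Fintype n] (M : Matrix n n ℂ) (h : M.IsHermitian)
    (x : n → ℂ) : (star x ⬝ᵥ M *ᵥ x).im = 0 := by
  have e1 : star x ⬝ᵥ M *ᵥ x = ∑ p, ∑ q, star (x p) * (M p q * x q) := by
    simp [dotProduct, Matrix.mulVec, Finset.mul_sum]
  have hz : star (star x ⬝ᵥ M *ᵥ x) = star x ⬝ᵥ M *ᵥ x := by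
    rw [e1, star_sum]
    simp only [star_sum, star_mul', star_star]
    rw [Finset.sum_comm]
    refine Finset.sum_congr rfl fun q _ => Finset.sum_congr rfl fun p _ => ?_
    rw [← h.apply q p]
    ring
  have := congrArg Complex.im hz
  simpa using by
    have : (starRingEnd ℂ) (star x ⬝ᵥ M *ᵥ x) = star x ⬝ᵥ M *ᵥ x := hz
    exact (Complex.conj_eq_iff_im.mp this)

lemma psd_of_herm_re {n : Type*} [Fintype n] (M : Matrix n n ℂ) (h : M.IsHermitian)
    (hre : ∀ x : n → ℂ, 0 ≤ (star x ⬝ᵥ M *ᵥ x).re) : M.PosSemidef := by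
  refine Matrix.PosSemidef.of_dotProduct_mulVec_nonneg h fun x => ?_
  rw [Complex.le_def]
  exact ⟨by simpa using hre x, by simpa using (herm_quad_im M h x).symm⟩

lemma pt_one {a b : ℕ} :
    partialTranspose (1 : Matrix (Fin a × Fin b) (Fin a × Fin b) ℂ) = 1 := by
  ext p q
  simp only [partialTranspose, Matrix.of_apply, Matrix.one_apply, Prod.ext_iff]
  by_cases h1 : p.1 = q.1 <;> by_cases h2 : p.2 = q.2 <;> simp [h1, h2, eq_comm]

lemma pt_smul {a b : ℕ} (c : ℂ) (M : Matrix (Fin a × Fin b) (Fin a × Fin b) ℂ) :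
    partialTranspose (c • M) = c • partialTranspose M := rfl

lemma pt_sub {a b : ℕ} (M N : Matrix (Fin a × Fin b) (Fin a × Fin b) ℂ) :
    partialTranspose (M - N) = partialTranspose M - partialTranspose N := rfl

lemma pt_sum {a b : ℕ} {ι : Type*} (s : Finset ι)
    (M : ι → Matrix (Fin a × Fin b) (Fin a × Fin b) ℂ) :
    partialTranspose (∑ i ∈ s, M i) = ∑ i ∈ s, partialTranspose (M i) := by
  ext p q; simp [partialTranspose, Matrix.sum_apply]

lemma pt_herm {a b : ℕ} (M : Matrix (Fin a × Fin b) (Fin a × Fin b) ℂ)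
    (h : M.IsHermitian) : (partialTranspose M).IsHermitian := by
  refine Matrix.IsHermitian.ext fun p q => ?_
  show star (partialTranspose M q p) = partialTranspose M p q
  show star (M (q.1, p.2) (p.1, q.2)) = M (p.1, q.2) (q.1, p.2)
  exact h.apply _ _

lemma completeness {a b : ℕ} (ψ : Fin (a * b) → Fin a × Fin b → ℂ)
    (hON : ∀ α β, ∑ p, star (ψ α p) * ψ β p = (if α = β then (1:ℂ) else 0)) :
    ∑ α, ketbra (ψ α) = (1 : Matrix (Fin a × Fin b) (Fin a × Fin b) ℂ) := by
  set U : Matrix (Fin (a * b)) (Fin a × Fin b) ℂ := Matrix.of fun α p => star (ψ α p) with hU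
  have h1 : U * Uᴴ = 1 := by
    ext α β
    simp only [Matrix.mul_apply, Matrix.conjTranspose_apply, hU, Matrix.of_apply, star_star,
      Matrix.one_apply]
    rw [hON α β]
  have h2 : Uᴴ * U = 1 := (mul_eq_one_comm_of_equiv finProdFinEquiv.symm).mp h1
  ext p q
  have := congrFun (congrFun h2 p) q
  simp only [Matrix.mul_apply, Matrix.conjTranspose_apply, hU, Matrix.of_apply, star_star] at this
  rw [Matrix.sum_apply]
  rw [← this]
  refine Finset.sum_congr rfl fun α _ => ?_
  simp [ketbra, mul_comm]

lemma normSq_inn_le {a b : ℕ} (ψ φ : Fin a × Fin b → ℂ) :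
    Complex.normSq (inn ψ φ) ≤ (∑ p, Complex.normSq (ψ p)) * (∑ p, Complex.normSq (φ p)) := by
  let ψ' : EuclideanSpace ℂ (Fin a × Fin b) := WithLp.toLp 2 ψ
  let φ' : EuclideanSpace ℂ (Fin a × Fin b) := WithLp.toLp 2 φ
  have hinner : (inner ℂ ψ' φ' : ℂ) = inn ψ φ := by
    simp [PiLp.inner_apply, RCLike.inner_apply, inn, ψ', φ', mul_comm]
  have hCS := norm_inner_le_norm (𝕜 := ℂ) ψ' φ'
  have hψ : ‖ψ'‖ ^ 2 = ∑ p, Complex.normSq (ψ p) := by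
    rw [EuclideanSpace.norm_eq, Real.sq_sqrt (by positivity)]
    exact Finset.sum_congr rfl fun p _ => by
      rw [Complex.sq_norm]
  have hφ : ‖φ'‖ ^ 2 = ∑ p, Complex.normSq (φ p) := by
    rw [EuclideanSpace.norm_eq, Real.sq_sqrt (by positivity)]
    exact Finset.sum_congr rfl fun p _ => by
      rw [Complex.sq_norm]
  have h1 : Complex.normSq (inn ψ φ) = ‖inn ψ φ‖ ^ 2 := by
    rw [Complex.sq_norm]
  rw [h1, ← hψ, ← hφ, ← hinner]
  calc ‖(inner ℂ ψ' φ' : ℂ)‖ ^ 2 ≤ (‖ψ'‖ * ‖φ'‖) ^ 2 := by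
        have h0 : (0:ℝ) ≤ ‖(inner ℂ ψ' φ' : ℂ)‖ := norm_nonneg _
        nlinarith
    _ = ‖ψ'‖ ^ 2 * ‖φ'‖ ^ 2 := by ring

lemma unit_sum_normSq {a b : ℕ} {φ : Fin a × Fin b → ℂ} (h : unitVec φ) :
    ∑ p, Complex.normSq (φ p) = 1 := by
  have h2 : ((∑ p, Complex.normSq (φ p) : ℝ) : ℂ) = 1 := by
    rw [← h]
    show _ = inn φ φ
    rw [inn]
    push_cast
    exact Finset.sum_congr rfl fun p _ => by
      rw [mul_comm]
      exact (Complex.mul_conj _).symm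
  exact_mod_cast h2

lemma knorm_bdd {a b : ℕ} (ψ : Fin a × Fin b → ℂ) :
    BddAbove { t : ℝ | ∃ φ : Fin a × Fin b → ℂ,
      unitVec φ ∧ schmidtRank φ ≤ 1 ∧ t = Complex.normSq (inn ψ φ) } := by
  refine ⟨∑ p, Complex.normSq (ψ p), fun t ht => ?_⟩
  obtain ⟨φ, hu, _, rfl⟩ := ht
  calc Complex.normSq (inn ψ φ)
      ≤ (∑ p, Complex.normSq (ψ p)) * (∑ p, Complex.normSq (φ p)) := normSq_inn_le ψ φ
    _ = ∑ p, Complex.normSq (ψ p) := by rw [unit_sum_normSq hu, mul_one]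

lemma schmidtRank_tens {a b : ℕ} (x : Fin a → ℂ) (v : Fin b → ℂ) :
    schmidtRank (tensVec x v) ≤ 1 := by
  have heq : (Matrix.of fun i j => tensVec x v (i, j)) =
      (Matrix.replicateCol Unit x) * (Matrix.replicateRow Unit v) := by
    ext i j
    simp [tensVec, Matrix.mul_apply, Matrix.replicateCol, Matrix.replicateRow]
  rw [schmidtRank, heq]
  calc ((Matrix.replicateCol Unit x) * (Matrix.replicateRow Unit v)).rank
      ≤ (Matrix.replicateCol Unit x).rank := Matrix.rank_mul_le_left _ _
    _ ≤ Fintype.card Unit := Matrix.rank_le_card_width _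
    _ = 1 := Fintype.card_unit

lemma unit_tens {a b : ℕ} {x : Fin a → ℂ} {v : Fin b → ℂ}
    (hx : ∑ i, Complex.normSq (x i) = 1) (hv : ∑ j, Complex.normSq (v j) = 1) :
    unitVec (tensVec x v) := by
  rw [unitVec, inn]
  rw [Fintype.sum_prod_type]
  have : ∀ i : Fin a, ∑ j : Fin b, star (tensVec x v (i, j)) * tensVec x v (i, j)
      = (Complex.normSq (x i) : ℂ) * ∑ j, (Complex.normSq (v j) : ℂ) := by
    intro i
    rw [Finset.mul_sum]
    refine Finset.sum_congr rfl fun j _ => ?_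
    simp only [tensVec, star_mul', Complex.star_def]
    rw [show (starRingEnd ℂ) (x i) * (starRingEnd ℂ) (v j) * (x i * v j)
        = (x i * (starRingEnd ℂ) (x i)) * (v j * (starRingEnd ℂ) (v j)) by ring,
      Complex.mul_conj, Complex.mul_conj]
  rw [Finset.sum_congr rfl fun i _ => this i, ← Finset.sum_mul]
  have e1 : (∑ i, (Complex.normSq (x i) : ℂ)) = ((∑ i, Complex.normSq (x i) : ℝ) : ℂ) := by
    push_cast; rfl
  have e2 : (∑ j, (Complex.normSq (v j) : ℂ)) = ((∑ j, Complex.normSq (v j) : ℝ) : ℂ) := by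
    push_cast; rfl
  rw [e1, e2, hx, hv]
  norm_num

lemma knorm_nonneg {a b : ℕ} (ha : 0 < a) (hb : 0 < b) (ψ : Fin a × Fin b → ℂ) :
    0 ≤ knormSq 1 ψ := by
  set x0 : Fin a → ℂ := fun i => if i = ⟨0, ha⟩ then 1 else 0 with hx0
  set v0 : Fin b → ℂ := fun j => if j = ⟨0, hb⟩ then 1 else 0 with hv0
  have hxs : ∑ i, Complex.normSq (x0 i) = 1 := by
    simp [hx0, apply_ite Complex.normSq]
  have hvs : ∑ j, Complex.normSq (v0 j) = 1 := by
    simp [hv0, apply_ite Complex.normSq]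
  have hmem : Complex.normSq (inn ψ (tensVec x0 v0)) ∈
      { t : ℝ | ∃ φ : Fin a × Fin b → ℂ,
        unitVec φ ∧ schmidtRank φ ≤ 1 ∧ t = Complex.normSq (inn ψ φ) } :=
    ⟨tensVec x0 v0, unit_tens hxs hvs, schmidtRank_tens x0 v0, rfl⟩
  exact le_trans (Complex.normSq_nonneg _) (le_csSup (knorm_bdd ψ) hmem)

lemma key_unit {a b : ℕ} (ha : 0 < a) (hb : 0 < b) (ψ : Fin a × Fin b → ℂ)
    (x : Fin a → ℂ) (hx : ∑ i, Complex.normSq (x i) = 1) :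
    ∑ j, Complex.normSq (∑ i, star (ψ (i, j)) * x i) ≤ knormSq 1 ψ := by
  set w : Fin b → ℂ := fun j => ∑ i, star (ψ (i, j)) * x i with hw
  set S := ∑ j, Complex.normSq (w j) with hS
  have hS0 : 0 ≤ S := Finset.sum_nonneg fun j _ => Complex.normSq_nonneg _
  rcases eq_or_lt_of_le hS0 with h0 | hpos
  · have hS0' : S = 0 := hS.trans h0.symm
    rw [hS0']
    exact knorm_nonneg ha hb ψ
  · set c := Real.sqrt S with hc
    have hcpos : 0 < c := Real.sqrt_pos.mpr hpos
    have hcc : c * c = S := Real.mul_self_sqrt hS0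
    set v : Fin b → ℂ := fun j => star (w j) / (c : ℂ) with hv
    have hvs : ∑ j, Complex.normSq (v j) = 1 := by
      have : ∀ j, Complex.normSq (v j) = Complex.normSq (w j) / S := by
        intro j
        rw [hv]
        simp only [map_div₀ Complex.normSq, Complex.normSq_ofReal]
        rw [show Complex.normSq (star (w j)) = Complex.normSq (w j) by
          simp [Complex.star_def, Complex.normSq_conj], hcc]
      rw [Finset.sum_congr rfl fun j _ => this j, ← Finset.sum_div, ← hS,
        div_self hpos.ne']
    have hinn : inn ψ (tensVec x v) = ((S / c : ℝ) : ℂ) := by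
      rw [inn, Fintype.sum_prod_type_right]
      have e1 : ∀ j : Fin b, (∑ i, star (ψ (i, j)) * tensVec x v (i, j))
          = w j * v j := by
        intro j
        rw [hw]
        simp only [tensVec]
        rw [Finset.sum_mul]
        refine Finset.sum_congr rfl fun i _ => by ring
      rw [Finset.sum_congr rfl fun j _ => e1 j]
      have e2 : ∀ j : Fin b, w j * v j = ((Complex.normSq (w j) / c : ℝ) : ℂ) := by
        intro j
        rw [hv]
        rw [show w j * (star (w j) / (c:ℂ)) = w j * star (w j) / (c:ℂ) by ring,
          show star (w j) = (starRingEnd ℂ) (w j) from rfl, Complex.mul_conj]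
        push_cast
        rfl
      rw [Finset.sum_congr rfl fun j _ => e2 j]
      have e3 : (∑ j, Complex.normSq (w j) / c) = S / c := by
        rw [← Finset.sum_div, hS]
      exact_mod_cast congrArg Complex.ofReal e3
    have hns : Complex.normSq (inn ψ (tensVec x v)) = S := by
      rw [hinn, Complex.normSq_ofReal, div_mul_div_comm, hcc, mul_div_assoc,
        div_self hpos.ne', mul_one]
    exact le_csSup (knorm_bdd ψ)
      ⟨tensVec x v, unit_tens hx hvs, schmidtRank_tens x v, hns.symm⟩

lemma key_hom {a b : ℕ} (ha : 0 < a) (hb : 0 < b) (ψ : Fin a × Fin b → ℂ)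
    (x : Fin a → ℂ) :
    ∑ j, Complex.normSq (∑ i, star (ψ (i, j)) * x i)
      ≤ knormSq 1 ψ * ∑ i, Complex.normSq (x i) := by
  set N := ∑ i, Complex.normSq (x i) with hN
  have hN0 : 0 ≤ N := Finset.sum_nonneg fun i _ => Complex.normSq_nonneg _
  rcases eq_or_lt_of_le hN0 with h0 | hpos
  · have hzero : ∀ i, x i = 0 := by
      intro i
      have hNz : ∑ i, Complex.normSq (x i) = 0 := by rw [← hN]; exact h0.symm
      have := (Finset.sum_eq_zero_iff_of_nonneg
        (fun i _ => Complex.normSq_nonneg (x i))).mp hNz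
      exact Complex.normSq_eq_zero.mp (this i (Finset.mem_univ i))
    have : ∀ j : Fin b, (∑ i, star (ψ (i, j)) * x i) = 0 := by
      intro j
      refine Finset.sum_eq_zero fun i _ => by rw [hzero i, mul_zero]
    rw [Finset.sum_congr rfl fun j _ => by rw [this j], ← h0, mul_zero]
    simp
  · set r := Real.sqrt N with hr
    have hrpos : 0 < r := Real.sqrt_pos.mpr hpos
    have hrr : r * r = N := Real.mul_self_sqrt hN0
    set x' : Fin a → ℂ := fun i => x i / (r : ℂ) with hx'
    have hx's : ∑ i, Complex.normSq (x' i) = 1 := by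
      have : ∀ i, Complex.normSq (x' i) = Complex.normSq (x i) / N := by
        intro i
        rw [hx']
        simp only [map_div₀ Complex.normSq, Complex.normSq_ofReal]
        rw [hrr]
      rw [Finset.sum_congr rfl fun i _ => this i, ← Finset.sum_div, ← hN,
        div_self hpos.ne']
    have hkey := key_unit ha hb ψ x' hx's
    have hscale : ∀ j : Fin b, Complex.normSq (∑ i, star (ψ (i, j)) * x' i)
        = Complex.normSq (∑ i, star (ψ (i, j)) * x i) / N := by
      intro j
      have : (∑ i, star (ψ (i, j)) * x' i) = (∑ i, star (ψ (i, j)) * x i) / (r : ℂ) := by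
        rw [Finset.sum_div]
        refine Finset.sum_congr rfl fun i _ => by rw [hx']; ring
      rw [this, map_div₀ Complex.normSq, Complex.normSq_ofReal, hrr]
    rw [Finset.sum_congr rfl fun j _ => hscale j, ← Finset.sum_div] at hkey
    calc ∑ j, Complex.normSq (∑ i, star (ψ (i, j)) * x i)
        = (∑ j, Complex.normSq (∑ i, star (ψ (i, j)) * x i)) / N * N := by
          field_simp
      _ ≤ knormSq 1 ψ * N := by
          exact mul_le_mul_of_nonneg_right hkey hN0

lemma pt_quad_le {a b : ℕ} (ha : 0 < a) (hb : 0 < b) (ψ φ : Fin a × Fin b → ℂ) :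
    (star φ ⬝ᵥ (partialTranspose (ketbra ψ)) *ᵥ φ).re
      ≤ knormSq 1 ψ * ∑ p, Complex.normSq (φ p) := by
  set X : Fin b → Fin b → ℂ := fun j j' => ∑ i, star (ψ (i, j)) * φ (i, j') with hX
  have e1 : star φ ⬝ᵥ partialTranspose (ketbra ψ) *ᵥ φ
      = ∑ j : Fin b, ∑ j' : Fin b, star (X j' j) * X j j' := by
    have e0 : star φ ⬝ᵥ partialTranspose (ketbra ψ) *ᵥ φ
        = ∑ p : Fin a × Fin b, ∑ q : Fin a × Fin b,
            (star (φ p) * ψ (p.1, q.2)) * (star (ψ (q.1, p.2)) * φ q) := by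
      simp only [dotProduct, Matrix.mulVec, Finset.mul_sum]
      refine Finset.sum_congr rfl fun p _ => Finset.sum_congr rfl fun q _ => ?_
      simp only [partialTranspose, ketbra, Matrix.of_apply, Pi.star_apply]
      ring
    rw [e0, Fintype.sum_prod_type_right]
    refine Finset.sum_congr rfl fun j _ => ?_
    have e2 : ∀ i : Fin a, ∑ q : Fin a × Fin b,
        (star (φ (i, j)) * ψ ((i, j).1, q.2)) * (star (ψ (q.1, (i, j).2)) * φ q)
        = ∑ j' : Fin b, ∑ i' : Fin a,
            (star (φ (i, j)) * ψ (i, j')) * (star (ψ (i', j)) * φ (i', j')) := by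
      intro i
      rw [Fintype.sum_prod_type_right]
    rw [Finset.sum_congr rfl fun i _ => e2 i, Finset.sum_comm]
    refine Finset.sum_congr rfl fun j' _ => ?_
    have hstar : star (X j' j) = ∑ i, star (φ (i, j)) * ψ (i, j') := by
      rw [hX]
      simp only [star_sum, star_mul', star_star]
      exact Finset.sum_congr rfl fun i _ => by ring
    rw [hstar]
    simp only [hX]
    rw [Finset.sum_mul_sum]
  have step2 : (star φ ⬝ᵥ partialTranspose (ketbra ψ) *ᵥ φ).re
      ≤ ∑ j : Fin b, ∑ j' : Fin b, Complex.normSq (X j j') := by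
    rw [e1, Complex.re_sum]
    have hterm : ∀ j j' : Fin b, (star (X j' j) * X j j').re
        ≤ (Complex.normSq (X j' j) + Complex.normSq (X j j')) / 2 := by
      intro j j'
      have h1 : (star (X j' j) * X j j').re ≤ ‖star (X j' j) * X j j'‖ :=
        Complex.re_le_norm _
      have h2 : ‖star (X j' j) * X j j'‖
          = ‖X j' j‖ * ‖X j j'‖ := by
        rw [norm_mul]
        congr 1
        rw [show star (X j' j) = (starRingEnd ℂ) (X j' j) from rfl]
        exact Complex.norm_conj _
      have h3 : ‖X j' j‖ * ‖X j j'‖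
          ≤ (‖X j' j‖ ^ 2 + ‖X j j'‖ ^ 2) / 2 := by
          nlinarith [sq_nonneg (‖X j' j‖ - ‖X j j'‖)]
      calc (star (X j' j) * X j j').re ≤ ‖X j' j‖ * ‖X j j'‖ := by
            rw [← h2]; exact h1
        _ ≤ (‖X j' j‖ ^ 2 + ‖X j j'‖ ^ 2) / 2 := h3
        _ = (Complex.normSq (X j' j) + Complex.normSq (X j j')) / 2 := by
            rw [Complex.sq_norm, Complex.sq_norm]
    calc ∑ j, (∑ j', star (X j' j) * X j j').re
        = ∑ j, ∑ j', (star (X j' j) * X j j').re := by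
          refine Finset.sum_congr rfl fun j _ => Complex.re_sum _ _
      _ ≤ ∑ j, ∑ j', (Complex.normSq (X j' j) + Complex.normSq (X j j')) / 2 :=
          Finset.sum_le_sum fun j _ => Finset.sum_le_sum fun j' _ => hterm j j'
      _ = ∑ j, ∑ j', Complex.normSq (X j j') := by
          have h1 : ∀ j : Fin b, ∑ j', (Complex.normSq (X j' j) + Complex.normSq (X j j')) / 2
              = ((∑ j', Complex.normSq (X j' j)) + ∑ j', Complex.normSq (X j j')) / 2 := by
            intro j; rw [← Finset.sum_div, Finset.sum_add_distrib]
          rw [Finset.sum_congr rfl fun j _ => h1 j, ← Finset.sum_div, Finset.sum_add_distrib,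
            show (∑ j, ∑ j', Complex.normSq (X j' j)) = ∑ j, ∑ j', Complex.normSq (X j j')
              from Finset.sum_comm]
          ring
  refine le_trans step2 ?_
  rw [Finset.sum_comm]
  calc ∑ j' : Fin b, ∑ j : Fin b, Complex.normSq (X j j')
      ≤ ∑ j' : Fin b, knormSq 1 ψ * ∑ i, Complex.normSq (φ (i, j')) :=
        Finset.sum_le_sum fun j' _ => key_hom ha hb ψ (fun i => φ (i, j'))
    _ = knormSq 1 ψ * ∑ p : Fin a × Fin b, Complex.normSq (φ p) := by
        rw [← Finset.mul_sum, Fintype.sum_prod_type_right]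

/-- spectral witnesses (k = 1) are decomposable:
W = A + B with A = Σ_{α>L}(λ_α−μ₁)P_α ≥ 0 and B = μ₁·I − Σ_{α≤L}(λ_α+μ₁)P_α with B^Γ ≥ 0. -/
theorem stmt7 {a b L : ℕ}
    (ψ : Fin (a * b) → Fin a × Fin b → ℂ)
    (hON : ∀ α β, ∑ p, star (ψ α p) * ψ β p = (if α = β then (1:ℂ) else 0))
    (lam : Fin (a * b) → ℝ) (hlam0 : ∀ α, 0 ≤ lam α)
    (hlampos : ∀ α : Fin (a * b), L ≤ (α : ℕ) → 0 < lam α)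
    (hL0 : 0 < L) (hL : L < a * b)
    (hsum : ∑ α ∈ Finset.univ.filter (fun α : Fin (a * b) => (α : ℕ) < L),
      knormSq 1 (ψ α) < 1)
    (mu : ℝ)
    (hmu : mu = (∑ α ∈ Finset.univ.filter (fun α : Fin (a * b) => (α : ℕ) < L),
                    lam α * knormSq 1 (ψ α)) /
                (1 - ∑ α ∈ Finset.univ.filter (fun α : Fin (a * b) => (α : ℕ) < L),
                    knormSq 1 (ψ α)))
    (hcond : ∀ α : Fin (a * b), L ≤ (α : ℕ) → mu ≤ lam α)
    (W A B : Matrix (Fin a × Fin b) (Fin a × Fin b) ℂ)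
    (hW : W = ∑ α ∈ Finset.univ.filter (fun α : Fin (a * b) => L ≤ (α : ℕ)),
                ((lam α : ℝ) : ℂ) • ketbra (ψ α)
            - ∑ α ∈ Finset.univ.filter (fun α : Fin (a * b) => (α : ℕ) < L),
                ((lam α : ℝ) : ℂ) • ketbra (ψ α))
    (hA : A = ∑ α ∈ Finset.univ.filter (fun α : Fin (a * b) => L ≤ (α : ℕ)),
                ((lam α - mu : ℝ) : ℂ) • ketbra (ψ α))
    (hB : B = ((mu : ℝ) : ℂ) • (1 : Matrix (Fin a × Fin b) (Fin a × Fin b) ℂ)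
            - ∑ α ∈ Finset.univ.filter (fun α : Fin (a * b) => (α : ℕ) < L),
                ((lam α + mu : ℝ) : ℂ) • ketbra (ψ α)) :
    A.PosSemidef ∧ (partialTranspose B).PosSemidef ∧ W = A + B := by
  have hab : 0 < a * b := hL0.trans hL
  have ha : 0 < a := by
    rcases Nat.eq_zero_or_pos a with h | h
    · simp [h] at hab
    · exact h
  have hb : 0 < b := by
    rcases Nat.eq_zero_or_pos b with h | h
    · simp [h] at hab
    · exact h
  set filtL := Finset.univ.filter (fun α : Fin (a * b) => (α : ℕ) < L) with hfiltL
  set filtG := Finset.univ.filter (fun α : Fin (a * b) => L ≤ (α : ℕ)) with hfiltG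
  have ht0 : ∀ α, 0 ≤ knormSq 1 (ψ α) := fun α => knorm_nonneg ha hb (ψ α)
  set T := ∑ α ∈ filtL, knormSq 1 (ψ α) with hT
  have hT0 : 0 ≤ T := Finset.sum_nonneg fun α _ => ht0 α
  have hT1 : T < 1 := hsum
  have hden : 0 < 1 - T := by linarith
  have hmu0 : 0 ≤ mu := by
    rw [hmu]
    exact div_nonneg (Finset.sum_nonneg fun α _ => mul_nonneg (hlam0 α) (ht0 α)) hden.le
  have hmukey : ∑ α ∈ filtL, (lam α + mu) * knormSq 1 (ψ α) = mu := by
    have h1 : mu * (1 - T) = ∑ α ∈ filtL, lam α * knormSq 1 (ψ α) := by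
      rw [hmu]; field_simp
    have h2 : ∑ α ∈ filtL, (lam α + mu) * knormSq 1 (ψ α)
        = (∑ α ∈ filtL, lam α * knormSq 1 (ψ α)) + mu * T := by
      rw [hT, Finset.mul_sum, ← Finset.sum_add_distrib]
      exact Finset.sum_congr rfl fun α _ => by ring
    rw [h2, ← h1]; ring
  -- A is PSD
  have hAherm : A.IsHermitian := by
    rw [hA]
    show _ᴴ = _
    rw [Matrix.conjTranspose_sum]
    refine Finset.sum_congr rfl fun α _ => ?_
    rw [Matrix.conjTranspose_smul, (ketbra_herm (ψ α)).eq]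
    congr 1
    simp [Complex.star_def, Complex.conj_ofReal]
  have hApsd : A.PosSemidef := by
    refine Matrix.PosSemidef.of_dotProduct_mulVec_nonneg hAherm fun x => ?_
    rw [hA, quad_sum]
    refine Finset.sum_nonneg fun α hα => ?_
    have hge : L ≤ (α : ℕ) := (Finset.mem_filter.mp hα).2
    rw [Matrix.smul_mulVec, dotProduct_smul, smul_eq_mul, ketbra_quad]
    rw [show ((lam α - mu : ℝ) : ℂ) * ((Complex.normSq (inn (ψ α) x) : ℝ) : ℂ)
        = (((lam α - mu) * Complex.normSq (inn (ψ α) x) : ℝ) : ℂ) by push_cast; ring]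
    rw [Complex.zero_le_real]
    exact mul_nonneg (by linarith [hcond α hge]) (Complex.normSq_nonneg _)
  -- B partial transpose is PSD
  have hBherm : B.IsHermitian := by
    rw [hB]
    show _ᴴ = _
    rw [Matrix.conjTranspose_sub, Matrix.conjTranspose_smul, Matrix.conjTranspose_one,
      Matrix.conjTranspose_sum]
    congr 1
    · rw [show star ((mu : ℝ) : ℂ) = ((mu : ℝ) : ℂ) from Complex.conj_ofReal mu]
    · refine Finset.sum_congr rfl fun α _ => ?_
      rw [Matrix.conjTranspose_smul, (ketbra_herm (ψ α)).eq,
        show star ((lam α + mu : ℝ) : ℂ) = ((lam α + mu : ℝ) : ℂ) from Complex.conj_ofReal _]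
  have hBtpsd : (partialTranspose B).PosSemidef := by
    refine psd_of_herm_re _ (pt_herm B hBherm) fun x => ?_
    have hBt : partialTranspose B = ((mu : ℝ) : ℂ) • 1
        - ∑ α ∈ filtL, ((lam α + mu : ℝ) : ℂ) • partialTranspose (ketbra (ψ α)) := by
      rw [hB, pt_sub, pt_smul, pt_one, pt_sum]
      rfl
    set S := ∑ p, Complex.normSq (x p) with hS
    have hquad1 : star x ⬝ᵥ (((mu : ℝ) : ℂ) • (1 : Matrix (Fin a × Fin b) (Fin a × Fin b) ℂ)) *ᵥ x
        = ((mu * S : ℝ) : ℂ) := by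
      rw [Matrix.smul_mulVec, dotProduct_smul, Matrix.one_mulVec, smul_eq_mul]
      have : star x ⬝ᵥ x = ((S : ℝ) : ℂ) := by
        rw [dotProduct, hS]
        push_cast
        exact Finset.sum_congr rfl fun p _ => by
          rw [Pi.star_apply, show star (x p) = (starRingEnd ℂ) (x p) from rfl, mul_comm,
            Complex.mul_conj]
      rw [this]
      push_cast
      ring
    have hre : (star x ⬝ᵥ (partialTranspose B) *ᵥ x).re
        = mu * S - ∑ α ∈ filtL, (lam α + mu)
            * (star x ⬝ᵥ (partialTranspose (ketbra (ψ α))) *ᵥ x).re := by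
      rw [hBt, Matrix.sub_mulVec, dotProduct_sub, quad_sum, hquad1, Complex.sub_re,
        Complex.re_sum, Complex.ofReal_re]
      congr 1
      refine Finset.sum_congr rfl fun α _ => ?_
      rw [Matrix.smul_mulVec, dotProduct_smul, smul_eq_mul, Complex.re_ofReal_mul]
    rw [hre]
    have hbound : ∑ α ∈ filtL, (lam α + mu)
          * (star x ⬝ᵥ (partialTranspose (ketbra (ψ α))) *ᵥ x).re
        ≤ ∑ α ∈ filtL, (lam α + mu) * (knormSq 1 (ψ α) * S) := by
      refine Finset.sum_le_sum fun α _ => ?_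
      refine mul_le_mul_of_nonneg_left ?_ (by linarith [hlam0 α])
      exact pt_quad_le ha hb (ψ α) x
    have heq : ∑ α ∈ filtL, (lam α + mu) * (knormSq 1 (ψ α) * S) = mu * S := by
      rw [show (∑ α ∈ filtL, (lam α + mu) * (knormSq 1 (ψ α) * S))
          = (∑ α ∈ filtL, (lam α + mu) * knormSq 1 (ψ α)) * S by
        rw [Finset.sum_mul]; exact Finset.sum_congr rfl fun α _ => by ring, hmukey]
    linarith [hbound, heq.le]
  -- W = A + B
  have hcomp : ∑ α, ketbra (ψ α) = (1 : Matrix (Fin a × Fin b) (Fin a × Fin b) ℂ) :=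
    completeness ψ hON
  have hfilt : Finset.univ.filter (fun α : Fin (a * b) => ¬ (α : ℕ) < L) = filtG := by
    ext α; simp [hfiltG, not_lt]
  have h1 : ((mu : ℝ) : ℂ) • (1 : Matrix (Fin a × Fin b) (Fin a × Fin b) ℂ)
      = ∑ α ∈ filtL, ((mu : ℝ) : ℂ) • ketbra (ψ α)
        + ∑ α ∈ filtG, ((mu : ℝ) : ℂ) • ketbra (ψ α) := by
    rw [← hcomp, Finset.smul_sum,
      ← Finset.sum_filter_add_sum_filter_not Finset.univ (fun α : Fin (a * b) => (α : ℕ) < L)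
        (fun α => ((mu : ℝ) : ℂ) • ketbra (ψ α)), hfilt]
  have e1 : (∑ α ∈ filtG, ((lam α - mu : ℝ) : ℂ) • ketbra (ψ α))
      + ∑ α ∈ filtG, ((mu : ℝ) : ℂ) • ketbra (ψ α)
      = ∑ α ∈ filtG, ((lam α : ℝ) : ℂ) • ketbra (ψ α) := by
    rw [← Finset.sum_add_distrib]
    refine Finset.sum_congr rfl fun α _ => ?_
    rw [← add_smul]
    congr 1
    push_cast
    ring
  have e2 : (∑ α ∈ filtL, ((mu : ℝ) : ℂ) • ketbra (ψ α))
      - ∑ α ∈ filtL, ((lam α + mu : ℝ) : ℂ) • ketbra (ψ α)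
      = - ∑ α ∈ filtL, ((lam α : ℝ) : ℂ) • ketbra (ψ α) := by
    rw [← Finset.sum_sub_distrib, ← Finset.sum_neg_distrib]
    refine Finset.sum_congr rfl fun α _ => ?_
    rw [← sub_smul, ← neg_smul]
    congr 1
    push_cast
    ring
  have hWAB : W = A + B := by
    rw [hW, hA, hB, h1]
    calc (∑ α ∈ filtG, ((lam α : ℝ) : ℂ) • ketbra (ψ α))
          - ∑ α ∈ filtL, ((lam α : ℝ) : ℂ) • ketbra (ψ α)
        = ((∑ α ∈ filtG, ((lam α - mu : ℝ) : ℂ) • ketbra (ψ α))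
            + ∑ α ∈ filtG, ((mu : ℝ) : ℂ) • ketbra (ψ α))
          + ((∑ α ∈ filtL, ((mu : ℝ) : ℂ) • ketbra (ψ α))
            - ∑ α ∈ filtL, ((lam α + mu : ℝ) : ℂ) • ketbra (ψ α)) := by
          rw [e1, e2]; abel
      _ = (∑ α ∈ filtG, ((lam α - mu : ℝ) : ℂ) • ketbra (ψ α))
          + ((∑ α ∈ filtL, ((mu : ℝ) : ℂ) • ketbra (ψ α)
            + ∑ α ∈ filtG, ((mu : ℝ) : ℂ) • ketbra (ψ α))
            - ∑ α ∈ filtL, ((lam α + mu : ℝ) : ℂ) • ketbra (ψ α)) := by abel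
  exact ⟨hApsd, hBtpsd, hWAB⟩
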